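/- For the ℓ₂-ℓ₂ dynamic estimator with sampling probabilities p_i = ‖A_{i:}‖₂|y_i − (y₀)_i| / ∑_{i'}‖A_{i':}‖₂|y_{i'} − (y₀)_{i'}| and q_j = ‖A_{:j}‖₂|x_j − (x₀)_j| / ∑_{j'}‖A_{:j'}‖₂|x_{j'} − (x₀)_{j'}|, the expected squared deviation satisfies E‖g̃(w) − g(w₀)‖₂² = (∑_i ‖A_{i:}‖₂|y_i − (y₀)_i|)² + (∑_j ‖A_{:j}‖₂|x_j − (x₀)_j|)² ≤ ‖A‖_F²(‖y − y₀‖₂² + ‖x − x₀‖₂²). -/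

import Mathlib

noncomputable def l2sq {d : ℕ} (v : Fin d → ℝ) : ℝ := ∑ i, v i ^ 2

noncomputable def l2norm {d : ℕ} (v : Fin d → ℝ) : ℝ := Real.sqrt (∑ i, v i ^ 2)

/-! Sampling each coordinate with probability proportional to the norm of the term it contributes
(importance sampling) makes every weighted term `p_i ‖(c_i / p_i) v_i‖²` equal to `‖v_i‖ |c_i| S`,
where `S = ∑ ‖v_i‖ |c_i|`; the second moment is therefore exactly `S²`, and Cauchy–Schwarz bounds
`S²` by `(∑ ‖v_i‖²)(∑ c_i²)`. Applied to the rows and to the columns of `A` this gives both claims. -/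

open Finset

lemma l2norm_sq {d : ℕ} (v : Fin d → ℝ) : l2norm v ^ 2 = l2sq v :=
  Real.sq_sqrt (sum_nonneg fun i _ => sq_nonneg (v i))

lemma l2sq_smul {d : ℕ} (r : ℝ) (v : Fin d → ℝ) : l2sq (r • v) = r ^ 2 * l2sq v := by
  simp [l2sq, mul_sum, mul_pow]

lemma l2sq_neg {d : ℕ} (v : Fin d → ℝ) : l2sq (-v) = l2sq v := by
  simp [l2sq]

/-- The identity also holds when the probability `‖v‖ |c| / S` vanishes, since then both sides
are `0` under the convention `x / 0 = 0`. -/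
lemma prob_mul_l2sq_smul_div_prob {d : ℕ} (v : Fin d → ℝ) (c S : ℝ) :
    (l2norm v * |c| / S) * l2sq ((c / (l2norm v * |c| / S)) • v) = l2norm v * |c| * S := by
  rw [l2sq_smul, ← l2norm_sq]
  set t := l2norm v * |c| with ht
  have ht_sq : t ^ 2 = c ^ 2 * l2norm v ^ 2 := by rw [ht, mul_pow, sq_abs]; ring
  rcases eq_or_ne t 0 with h | h
  · simp [h]
  rcases eq_or_ne S 0 with hS | hS
  · simp [hS]
  field_simp
  linear_combination -ht_sq

lemma sum_prob_mul_l2sq_smul_div_prob {ι : Type*} [Fintype ι] {d : ℕ}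
    (v : ι → Fin d → ℝ) (c p : ι → ℝ)
    (hp : ∀ i, p i = l2norm (v i) * |c i| / ∑ i', l2norm (v i') * |c i'|) :
    ∑ i, p i * l2sq ((c i / p i) • v i) = (∑ i, l2norm (v i) * |c i|) ^ 2 := by
  simp only [hp, prob_mul_l2sq_smul_div_prob, ← sum_mul, sq]

lemma sq_sum_l2norm_mul_abs_le {ι : Type*} [Fintype ι] {d : ℕ} (v : ι → Fin d → ℝ) (c : ι → ℝ) :
    (∑ i, l2norm (v i) * |c i|) ^ 2 ≤ (∑ i, l2sq (v i)) * ∑ i, c i ^ 2 := by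
  simpa only [l2norm_sq, sq_abs] using
    sum_mul_sq_le_sq_mul_sq univ (fun i => l2norm (v i)) (fun i => |c i|)

/-- the ℓ₂-ℓ₂ dynamic estimator with probabilities
`p_i ∝ ‖A_{i:}‖₂ |y_i − y₀ᵢ|`, `q_j ∝ ‖A_{:j}‖₂ |x_j − x₀ⱼ|` satisfies
`E‖g̃(w) − g(w₀)‖₂² = (∑_i ‖A_{i:}‖₂|y_i − y₀ᵢ|)² + (∑_j ‖A_{:j}‖₂|x_j − x₀ⱼ|)²
 ≤ ‖A‖_F² (‖y − y₀‖₂² + ‖x − x₀‖₂²)`. -/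
theorem l2_l2_dynamic_estimator {m n : ℕ}
    (A : Matrix (Fin m) (Fin n) ℝ)
    (x x₀ : Fin n → ℝ) (y y₀ : Fin m → ℝ)
    (p : Fin m → ℝ)
    (hp : ∀ i, p i = l2norm (A i) * |y i - y₀ i| /
      ∑ i', l2norm (A i') * |y i' - y₀ i'|)
    (q : Fin n → ℝ)
    (hq : ∀ j, q j = l2norm (fun i => A i j) * |x j - x₀ j| /
      ∑ j', l2norm (fun i => A i j') * |x j' - x₀ j'|)
    (Gx : Fin m → Fin n → ℝ) (Gy : Fin n → Fin m → ℝ)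
    (hGx : ∀ i, Gx i =
      (fun k => ∑ i', A i' k * y₀ i') + ((y i - y₀ i) / p i) • A i)
    (hGy : ∀ j, Gy j =
      (fun i => -∑ j', A i j' * x₀ j') - ((x j - x₀ j) / q j) • (fun i => A i j)) :
    (∑ i, p i * l2sq (Gx i - fun k => ∑ i', A i' k * y₀ i') +
      ∑ j, q j * l2sq (Gy j - fun i' => -∑ j', A i' j' * x₀ j') =
      (∑ i, l2norm (A i) * |y i - y₀ i|) ^ 2 +
        (∑ j, l2norm (fun i => A i j) * |x j - x₀ j|) ^ 2) ∧
    ((∑ i, l2norm (A i) * |y i - y₀ i|) ^ 2 +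
        (∑ j, l2norm (fun i => A i j) * |x j - x₀ j|) ^ 2 ≤
      (∑ i, ∑ j, A i j ^ 2) * (l2sq (y - y₀) + l2sq (x - x₀))) := by
  constructor
  · simp only [hGx, hGy, add_sub_cancel_left, sub_sub_cancel_left, l2sq_neg]
    exact congrArg₂ (· + ·)
      (sum_prob_mul_l2sq_smul_div_prob A (fun i => y i - y₀ i) p hp)
      (sum_prob_mul_l2sq_smul_div_prob (fun j i => A i j) (fun j => x j - x₀ j) q hq)
  · have h_rows := sq_sum_l2norm_mul_abs_le A (fun i => y i - y₀ i)
    have h_cols := sq_sum_l2norm_mul_abs_le (fun j i => A i j) (fun j => x j - x₀ j)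
    rw [show ∑ j, l2sq (fun i => A i j) = ∑ i, ∑ j, A i j ^ 2 from sum_comm] at h_cols
    rw [mul_add]
    exact add_le_add h_rows h_cols
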